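/- arXiv:2504.02631 — 5 statements merged into one kernel-verified Lean document; each statement's English description precedes it below -/
import Mathlib

section
/- Let μ > 0 and let A be a real p×p matrix. The 3p×3p block matrix M = [[μAᵀA, 0, Aᵀ], [0, μI_p, −I_p], [A, −I_p, (2/μ)I_p]] is symmetric positive semidefinite. -/
/-!
With `C = [[μA, 0, I], [0, μI, −I]]` one has `M = μ⁻¹ • CᵀC`, i.e.
`xᵀMx = (‖μAx₁ + x₃‖² + ‖μx₂ − x₃‖²) / μ`; a positive multiple of a Gram matrix is
positive semidefinite.
-/

open Matrix

variable {m n : Type*} [Fintype m] [DecidableEq m]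

def blockFactor (μ : ℝ) (A : Matrix m n ℝ) : Matrix (m ⊕ m) ((n ⊕ m) ⊕ m) ℝ :=
  fromCols (fromBlocks (μ • A) 0 0 (μ • 1)) (fromRows 1 (-1))

theorem blockFactor_transpose_mul_self {μ : ℝ} (hμ : μ ≠ 0) (A : Matrix m n ℝ) :
    (blockFactor μ A)ᵀ * blockFactor μ A = μ • fromBlocks
      (fromBlocks (μ • (Aᵀ * A)) 0 0 (μ • (1 : Matrix m m ℝ)))
      (fromRows Aᵀ (-1)) (fromCols A (-1)) ((2 / μ) • (1 : Matrix m m ℝ)) := by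
  rw [blockFactor, transpose_fromCols, fromRows_mul_fromCols, fromBlocks_transpose,
    transpose_fromRows, fromBlocks_mul_fromRows, fromCols_mul_fromBlocks, fromCols_mul_fromRows,
    fromBlocks_multiply, fromBlocks_smul, fromBlocks_smul]
  congr 1
  · simp [smul_smul]
  · ext (i | i) j <;> simp
  · ext i (j | j) <;> simp
  · rw [smul_smul, mul_div_cancel₀ _ hμ]
    simp [two_smul]

/-- The 3p×3p block matrix `M = [[μAᵀA, 0, Aᵀ], [0, μI, −I], [A, −I, (2/μ)I]]`
is symmetric positive semidefinite whenever `μ > 0`. -/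
theorem stmt2 {p : ℕ} (μ : ℝ) (hμ : 0 < μ) (A : Matrix (Fin p) (Fin p) ℝ) :
    (Matrix.fromBlocks
      (Matrix.fromBlocks (μ • (Aᵀ * A)) 0 0 (μ • (1 : Matrix (Fin p) (Fin p) ℝ)))
      (Matrix.fromRows Aᵀ (-(1 : Matrix (Fin p) (Fin p) ℝ)))
      (Matrix.fromCols A (-(1 : Matrix (Fin p) (Fin p) ℝ)))
      ((2 / μ) • (1 : Matrix (Fin p) (Fin p) ℝ))).PosSemidef := by
  have hGram := (posSemidef_conjTranspose_mul_self (blockFactor μ A)).smul (inv_nonneg.2 hμ.le)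
  rwa [conjTranspose_eq_transpose_of_trivial, blockFactor_transpose_mul_self hμ.ne', smul_smul,
    inv_mul_cancel₀ hμ.ne', one_smul] at hGram
end

section
/- Let μ > 0, let A be a real p×p matrix, and let η > 0 be such that η I_p − μ AᵀA is positive definite (equivalently, η exceeds the largest eigenvalue of μ AᵀA). Then the 3p×3p block matrix H = [[η I_p, 0, Aᵀ], [0, μI_p, −I_p], [A, −I_p, (2/μ)I_p]] is symmetric positive definite. -/
open Matrix
open scoped ComplexOrder

/-!
A Hermitian block matrix `[[A, B], [Bᴴ, D]]` with `D` positive definite is positive definite as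
soon as its Schur complement `A - B D⁻¹ Bᴴ` is. Taking the Schur complement of `H` with respect to
its scalar block `(2/μ) I` leaves `[[ηI - (μ/2) AᵀA, (μ/2) Aᵀ], [(μ/2) A, (μ/2) I]]`, and taking
that of the scalar block `(μ/2) I` of this matrix leaves exactly `ηI - μ AᵀA`.
-/

theorem Matrix.PosDef.fromBlocks_of_schur₂₂ {𝕜 m n : Type*} [RCLike 𝕜] [Fintype m] [Fintype n]
    [DecidableEq m] [DecidableEq n] (A : Matrix m m 𝕜) (B : Matrix m n 𝕜)
    {D : Matrix n n 𝕜} (hD : D.PosDef) (hS : (A - B * D⁻¹ * Bᴴ).PosDef) :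
    (fromBlocks A B Bᴴ D).PosDef := by
  have := hD.isUnit.invertible
  refine ((hD.fromBlocks₂₂ A B).mpr hS.posSemidef).posDef_iff_isUnit.mpr ?_
  rw [isUnit_iff_isUnit_det, det_fromBlocks₂₂, invOf_eq_nonsing_inv, IsUnit.mul_iff,
    ← isUnit_iff_isUnit_det, ← isUnit_iff_isUnit_det]
  exact ⟨hD.isUnit, hS.isUnit⟩

theorem Matrix.posDef_fromBlocks_smul_one {𝕜 m n : Type*} [RCLike 𝕜] [Fintype m] [Fintype n]
    [DecidableEq m] [DecidableEq n] (A : Matrix m m 𝕜) (B : Matrix m n 𝕜) {c : ℝ} (hc : 0 < c)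
    (hS : (A - c⁻¹ • (B * Bᴴ)).PosDef) : (fromBlocks A B Bᴴ (c • 1)).PosDef := by
  have hinv : (c • 1 : Matrix n n 𝕜)⁻¹ = c⁻¹ • 1 :=
    inv_eq_left_inv <| by rw [smul_mul_smul, inv_mul_cancel₀ hc.ne', one_mul, one_smul]
  refine PosDef.fromBlocks_of_schur₂₂ A B (PosDef.one.smul hc) ?_
  rwa [hinv, Matrix.mul_smul, Matrix.mul_one, Matrix.smul_mul]

theorem stmt3_general {p : ℕ} (μ η : ℝ) (hμ : 0 < μ)
    (A : Matrix (Fin p) (Fin p) ℝ)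
    (hS : (η • (1 : Matrix (Fin p) (Fin p) ℝ) - μ • (Aᵀ * A)).PosDef) :
    (Matrix.fromBlocks
      (Matrix.fromBlocks (η • (1 : Matrix (Fin p) (Fin p) ℝ)) 0 0
        (μ • (1 : Matrix (Fin p) (Fin p) ℝ)))
      (Matrix.fromRows Aᵀ (-(1 : Matrix (Fin p) (Fin p) ℝ)))
      (Matrix.fromCols A (-(1 : Matrix (Fin p) (Fin p) ℝ)))
      ((2 / μ) • (1 : Matrix (Fin p) (Fin p) ℝ))).PosDef := by
  have hcols : fromCols A (-1) = (fromRows Aᵀ (-1 : Matrix (Fin p) (Fin p) ℝ))ᴴ := by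
    rw [conjTranspose_fromRows_eq_fromCols_conjTranspose, conjTranspose_neg, conjTranspose_one,
      conjTranspose_eq_transpose_of_trivial, transpose_transpose]
  have hschur₁ : fromBlocks (η • 1) 0 0 (μ • 1) -
      (2 / μ)⁻¹ • (fromRows Aᵀ (-1) * (fromRows Aᵀ (-1 : Matrix (Fin p) (Fin p) ℝ))ᴴ) =
      fromBlocks (η • 1 - (μ / 2) • (Aᵀ * A)) ((μ / 2) • Aᵀ) ((μ / 2) • Aᵀ)ᴴ ((μ / 2) • 1) := by
    rw [← hcols, fromRows_mul_fromCols, fromBlocks_smul, sub_eq_add_neg, fromBlocks_neg,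
      fromBlocks_add, inv_div]
    congr 1 <;> simp only [conjTranspose_eq_transpose_of_trivial, transpose_smul,
      transpose_transpose, Matrix.mul_neg, Matrix.neg_mul, Matrix.mul_one,
      Matrix.one_mul] <;> module
  have hschur₂ : η • 1 - (μ / 2) • (Aᵀ * A) -
      (μ / 2)⁻¹ • ((μ / 2) • Aᵀ * ((μ / 2) • Aᵀ)ᴴ) = η • 1 - μ • (Aᵀ * A) := by
    rw [conjTranspose_smul, star_trivial, conjTranspose_eq_transpose_of_trivial,
      transpose_transpose, Matrix.smul_mul, Matrix.mul_smul, smul_smul, smul_smul]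
    field_simp
    module
  rw [hcols]
  refine posDef_fromBlocks_smul_one _ _ (div_pos two_pos hμ) ?_
  rw [hschur₁]
  refine posDef_fromBlocks_smul_one _ _ (half_pos hμ) ?_
  rwa [hschur₂]

/-- If `μ > 0` and `η > 0` is such that `ηI − μAᵀA` is positive definite, then the
3p×3p block matrix `H = [[ηI, 0, Aᵀ], [0, μI, −I], [A, −I, (2/μ)I]]` is
symmetric positive definite. -/
theorem stmt3 {p : ℕ} (μ η : ℝ) (hμ : 0 < μ) (hη : 0 < η)
    (A : Matrix (Fin p) (Fin p) ℝ)
    (hS : (η • (1 : Matrix (Fin p) (Fin p) ℝ) - μ • (Aᵀ * A)).PosDef) :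
    (Matrix.fromBlocks
      (Matrix.fromBlocks (η • (1 : Matrix (Fin p) (Fin p) ℝ)) 0 0
        (μ • (1 : Matrix (Fin p) (Fin p) ℝ)))
      (Matrix.fromRows Aᵀ (-(1 : Matrix (Fin p) (Fin p) ℝ)))
      (Matrix.fromCols A (-(1 : Matrix (Fin p) (Fin p) ℝ)))
      ((2 / μ) • (1 : Matrix (Fin p) (Fin p) ℝ))).PosDef :=
  stmt3_general μ η hμ A hS
end

section
/- Let μ > 0, let K ≥ 1, and let A_i be real p×p_i matrices for i = 1, …, K. The block matrix M_K = [[Λ_K, Gᵀ], [G, ((K+1)/μ) I_p]], where Λ_K = blockdiag(μA_1ᵀA_1, …, μA_KᵀA_K, μI_p) and G = (A_1, …, A_K, −I_p), is symmetric positive semidefinite. -/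
/-!
With `H = blockdiag(A₁, …, A_K, −I)` and `F = [I; …; I]` the stack of `K + 1` identity blocks,
one has `G = FᵀH`, `Λ_K = μ HᵀH` and `FᵀF = (K + 1) I`. Hence `M_K = μ⁻¹ RᵀR` for
`R = [μH, F]`, a Gram matrix.
-/

open Matrix

namespace Matrix

theorem posSemidef_fromBlocks_gram {l m k : Type*} [Fintype l] [Fintype m] [Fintype k]
    (H : Matrix l m ℝ) (F : Matrix l k ℝ) {μ : ℝ} (hμ : 0 < μ) :
    (fromBlocks (μ • (Hᵀ * H)) (Fᵀ * H)ᵀ (Fᵀ * H) (μ⁻¹ • (Fᵀ * F))).PosSemidef := by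
  have hgram : fromBlocks (μ • (Hᵀ * H)) (Fᵀ * H)ᵀ (Fᵀ * H) (μ⁻¹ • (Fᵀ * F)) =
      μ⁻¹ • ((fromCols (μ • H) F)ᴴ * fromCols (μ • H) F) := by
    rw [conjTranspose_eq_transpose_of_trivial, transpose_fromCols, fromRows_mul_fromCols,
      transpose_mul, transpose_transpose]
    simp only [transpose_smul, Matrix.smul_mul, Matrix.mul_smul, fromBlocks_smul, smul_smul,
      inv_mul_cancel_left₀ hμ.ne', inv_mul_cancel₀ hμ.ne', one_smul]
  rw [hgram]
  exact (posSemidef_conjTranspose_mul_self _).smul (inv_nonneg.2 hμ.le)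

def identityStack (ι m α : Type*) [DecidableEq m] [Zero α] [One α] :
    Matrix (Σ _ : ι, m) m α :=
  (1 : Matrix m m α).submatrix Sigma.snd id

variable {ι m α : Type*} [Fintype ι] [Fintype m] [DecidableEq m] [Semiring α]

theorem identityStack_transpose_mul_self :
    (identityStack ι m α)ᵀ * identityStack ι m α = (Fintype.card ι : α) • 1 := by
  ext r t
  by_cases hrt : r = t <;> simp [identityStack, mul_apply, Fintype.sum_sigma, one_apply, hrt]

theorem identityStack_transpose_mul_blockDiagonal' [DecidableEq ι] {n : ι → Type*}
    [∀ i, Fintype (n i)] (A : ∀ i, Matrix m (n i) α) :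
    (identityStack ι m α)ᵀ * blockDiagonal' A = of fun r (s : Σ i, n i) => A s.1 r s.2 := by
  ext r ⟨i, s⟩
  simp [identityStack, mul_apply, Fintype.sum_sigma, one_apply, blockDiagonal'_apply]

end Matrix

theorem stmt4_general {p K : ℕ} (μ : ℝ) (hμ : 0 < μ)
    (pdim : Fin K → ℕ) (A : ∀ i : Fin K, Matrix (Fin p) (Fin (pdim i)) ℝ) :
    (Matrix.fromBlocks
      (Matrix.fromBlocks
        (Matrix.blockDiagonal' (fun i => μ • ((A i)ᵀ * A i))) 0 0
        (μ • (1 : Matrix (Fin p) (Fin p) ℝ)))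
      (Matrix.fromCols
        (Matrix.of fun (r : Fin p) (s : Σ i : Fin K, Fin (pdim i)) => A s.1 r s.2)
        (-(1 : Matrix (Fin p) (Fin p) ℝ)))ᵀ
      (Matrix.fromCols
        (Matrix.of fun (r : Fin p) (s : Σ i : Fin K, Fin (pdim i)) => A s.1 r s.2)
        (-(1 : Matrix (Fin p) (Fin p) ℝ)))
      (((K + 1 : ℝ) / μ) • (1 : Matrix (Fin p) (Fin p) ℝ))).PosSemidef := by
  set H : Matrix _ _ ℝ := fromBlocks (blockDiagonal' A) 0 0 (-1 : Matrix (Fin p) (Fin p) ℝ)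
  set F : Matrix _ (Fin p) ℝ :=
    fromRows (identityStack (Fin K) (Fin p) ℝ) (1 : Matrix (Fin p) (Fin p) ℝ)
  have hHH : Hᵀ * H = fromBlocks (blockDiagonal' fun i => (A i)ᵀ * A i) 0 0 1 := by
    simp [H, fromBlocks_transpose, fromBlocks_multiply, blockDiagonal'_transpose,
      blockDiagonal'_mul]
  have hFH : Fᵀ * H = fromCols (of fun r (s : Σ i, Fin (pdim i)) => A s.1 r s.2) (-1) := by
    simp [F, H, transpose_fromRows, fromCols_mul_fromBlocks,
      identityStack_transpose_mul_blockDiagonal']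
  have hFF : Fᵀ * F = ((K : ℝ) + 1) • 1 := by
    simp [F, transpose_fromRows, fromCols_mul_fromRows, identityStack_transpose_mul_self,
      add_smul]
  have hM := posSemidef_fromBlocks_gram H F hμ
  rw [hHH, hFH, hFF, smul_smul, inv_mul_eq_div, fromBlocks_smul, smul_zero, smul_zero,
    ← blockDiagonal'_smul] at hM
  exact hM

/-- With `Λ_K = blockdiag(μA₁ᵀA₁, …, μA_KᵀA_K, μI_p)` and `G = (A₁, …, A_K, −I_p)`,
the block matrix `M_K = [[Λ_K, Gᵀ], [G, ((K+1)/μ) I_p]]` is symmetric positive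
semidefinite whenever `μ > 0` and `K ≥ 1`. -/
theorem stmt4 {p K : ℕ} (hK : 1 ≤ K) (μ : ℝ) (hμ : 0 < μ)
    (pdim : Fin K → ℕ) (A : ∀ i : Fin K, Matrix (Fin p) (Fin (pdim i)) ℝ) :
    (Matrix.fromBlocks
      (Matrix.fromBlocks
        (Matrix.blockDiagonal' (fun i => μ • ((A i)ᵀ * A i))) 0 0
        (μ • (1 : Matrix (Fin p) (Fin p) ℝ)))
      (Matrix.fromCols
        (Matrix.of fun (r : Fin p) (s : Σ i : Fin K, Fin (pdim i)) => A s.1 r s.2)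
        (-(1 : Matrix (Fin p) (Fin p) ℝ)))ᵀ
      (Matrix.fromCols
        (Matrix.of fun (r : Fin p) (s : Σ i : Fin K, Fin (pdim i)) => A s.1 r s.2)
        (-(1 : Matrix (Fin p) (Fin p) ℝ)))
      (((K + 1 : ℝ) / μ) • (1 : Matrix (Fin p) (Fin p) ℝ))).PosSemidef :=
  stmt4_general μ hμ pdim A
end

section
/- Suppose the sequence g^t = (β^t, z^t, u^t), with z^t ∈ Z_r for all t, satisfies the PPA variational inequality with a symmetric positive definite matrix H, and let g* = (β*, z*, u*) be any saddle point. Then for every t, ‖g^{t+1} − g*‖_H² ≤ ‖g^t − g*‖_H² − ‖g^{t+1} − g^t‖_H². -/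
open Matrix Filter

noncomputable section

/-- Vectors in ℝ^p. -/
abbrev Vec (p : ℕ) := Fin p → ℝ

/-- Triples `g = (β, z, u) ∈ ℝ^p × ℝ^p × ℝ^p`. -/
abbrev Trip (p : ℕ) := Vec p × Vec p × Vec p

/-- Index type for ℝ^{3p}. -/
abbrev Idx3 (p : ℕ) := Fin p ⊕ Fin p ⊕ Fin p

/-- Identify a triple `(β, z, u)` with a vector in ℝ^{3p}. -/
def toSum {p : ℕ} (g : Trip p) : Idx3 p → ℝ := Sum.elim g.1 (Sum.elim g.2.1 g.2.2)

/-- The operator `F(β, z, u) = (−Aᵀu, u, Aβ − z − c)`. -/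
def Fop {p : ℕ} (A : Matrix (Fin p) (Fin p) ℝ) (c : Vec p) (g : Trip p) : Trip p :=
  (-(Aᵀ *ᵥ g.2.2), g.2.2, A *ᵥ g.1 - g.2.1 - c)

/-- Membership in the box `Z_r = {z : ‖z‖_∞ ≤ r}`. -/
def inZ {p : ℕ} (r : ℝ) (z : Vec p) : Prop := ∀ j, |z j| ≤ r

/-- The ℓ₁ norm on ℝ^p. -/
def l1 {p : ℕ} (β : Vec p) : ℝ := ∑ j, |β j|

/-- The Euclidean inner product on ℝ^{3p}. -/
def ip {p : ℕ} (v w : Trip p) : ℝ := toSum v ⬝ᵥ toSum w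

/-- The bilinear form `⟨v, H w⟩` on ℝ^{3p}; in particular `ipH H v v = ‖v‖_H²`. -/
def ipH {p : ℕ} (H : Matrix (Idx3 p) (Idx3 p) ℝ) (v w : Trip p) : ℝ :=
  toSum v ⬝ᵥ (H *ᵥ toSum w)

/-- `g* = (β*, z*, u*)` is a saddle point: `z* ∈ Z_r` and
`‖β‖₁ − ‖β*‖₁ + ⟨g − g*, F(g*)⟩ ≥ 0` for all `g = (β, z, u)` with `z ∈ Z_r`. -/
def IsSaddle {p : ℕ} (A : Matrix (Fin p) (Fin p) ℝ) (c : Vec p) (r : ℝ)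
    (gs : Trip p) : Prop :=
  inZ r gs.2.1 ∧ ∀ g : Trip p, inZ r g.2.1 →
    0 ≤ l1 g.1 - l1 gs.1 + ip (g - gs) (Fop A c gs)

/-- The sequence `g^t` satisfies the PPA variational inequality with matrix `H`:
for every `t` and every `g = (β, z, u)` with `z ∈ Z_r`,
`‖β‖₁ − ‖β^{t+1}‖₁ + ⟨g − g^{t+1}, F(g^{t+1})⟩ ≥ ⟨g − g^{t+1}, H(g^t − g^{t+1})⟩`. -/
def SatisfiesPVI {p : ℕ} (A : Matrix (Fin p) (Fin p) ℝ) (c : Vec p) (r : ℝ)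
    (H : Matrix (Idx3 p) (Idx3 p) ℝ) (g : ℕ → Trip p) : Prop :=
  ∀ t : ℕ, ∀ gg : Trip p, inZ r gg.2.1 →
    ipH H (gg - g (t + 1)) (g t - g (t + 1)) ≤
      l1 gg.1 - l1 (g (t + 1)).1 + ip (gg - g (t + 1)) (Fop A c (g (t + 1)))

/-! Taking `g = g*` in the PPA inequality and `g = g^{t+1}` in the saddle-point inequality
and adding, the ℓ₁ terms cancel and the `F` terms combine into
`⟨g^{t+1} − g*, F(g^{t+1}) − F(g*)⟩`, which vanishes because `F` is affine with a
skew-symmetric linear part. Hence `⟨g^{t+1} − g*, H(g^t − g^{t+1})⟩ ≥ 0`, and expanding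
`‖g^t − g*‖_H²` along `g^t − g* = (g^{t+1} − g*) + (g^t − g^{t+1})` with `H` symmetric
gives the claim. -/

namespace Matrix

variable {n R : Type*} [Fintype n] [CommRing R]

theorem IsSymm.dotProduct_mulVec_comm {H : Matrix n n R} (hH : H.IsSymm) (x y : n → R) :
    x ⬝ᵥ (H *ᵥ y) = y ⬝ᵥ (H *ᵥ x) := by
  rw [dotProduct_mulVec, ← mulVec_transpose, hH.eq, dotProduct_comm]

theorem IsSymm.dotProduct_mulVec_le_sub [PartialOrder R] [IsOrderedAddMonoid R]
    {H : Matrix n n R} (hH : H.IsSymm) {x y : n → R} (h : 0 ≤ y ⬝ᵥ (H *ᵥ (x - y))) :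
    y ⬝ᵥ (H *ᵥ y) ≤ x ⬝ᵥ (H *ᵥ x) - (y - x) ⬝ᵥ (H *ᵥ (y - x)) := by
  have hexpand : x ⬝ᵥ (H *ᵥ x) - (y - x) ⬝ᵥ (H *ᵥ (y - x)) =
      y ⬝ᵥ (H *ᵥ y) + 2 * y ⬝ᵥ (H *ᵥ (x - y)) := by
    have := hH.dotProduct_mulVec_comm x y
    simp only [mulVec_sub, dotProduct_sub, sub_dotProduct] at this ⊢
    linear_combination this
  rw [hexpand]
  exact le_add_of_nonneg_right (by simpa [two_mul] using add_nonneg h h)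

end Matrix

section Triples

variable {p : ℕ}

theorem toSum_sub (v w : Trip p) : toSum (v - w) = toSum v - toSum w := by
  funext i; rcases i with i | i | i <;> rfl

theorem ip_eq_add (v w : Trip p) :
    ip v w = v.1 ⬝ᵥ w.1 + v.2.1 ⬝ᵥ w.2.1 + v.2.2 ⬝ᵥ w.2.2 := by
  simp only [ip, toSum, dotProduct, Fintype.sum_sum_type, Sum.elim_inl, Sum.elim_inr, add_assoc]

theorem ip_sub_Fop_sub_Fop (A : Matrix (Fin p) (Fin p) ℝ) (c : Vec p) (v w : Trip p) :
    ip (v - w) (Fop A c v - Fop A c w) = 0 := by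
  have hfst : -(Aᵀ *ᵥ v.2.2) - -(Aᵀ *ᵥ w.2.2) = -(Aᵀ *ᵥ (v.2.2 - w.2.2)) := by
    rw [mulVec_sub]; abel
  have hlast : A *ᵥ v.1 - v.2.1 - c - (A *ᵥ w.1 - w.2.1 - c) =
      A *ᵥ (v.1 - w.1) - (v.2.1 - w.2.1) := by
    rw [mulVec_sub]; abel
  simp only [ip_eq_add, Fop, Prod.fst_sub, Prod.snd_sub, hfst, hlast]
  generalize v.1 - w.1 = a, v.2.1 - w.2.1 = b, v.2.2 - w.2.2 = d
  rw [dotProduct_neg, dotProduct_mulVec, vecMul_transpose, dotProduct_sub,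
    dotProduct_comm (A *ᵥ a), dotProduct_comm b]
  ring

theorem ipH_nonneg_of_saddle {A : Matrix (Fin p) (Fin p) ℝ} {c : Vec p} {r : ℝ}
    {H : Matrix (Idx3 p) (Idx3 p) ℝ} {g : ℕ → Trip p} (hz : ∀ t, inZ r (g t).2.1)
    (hPVI : SatisfiesPVI A c r H g) {gs : Trip p} (hgs : IsSaddle A c r gs) (t : ℕ) :
    0 ≤ ipH H (g (t + 1) - gs) (g t - g (t + 1)) := by
  have hprox := hPVI t gs hgs.1
  have hsaddle := hgs.2 (g (t + 1)) (hz (t + 1))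
  have hskew := ip_sub_Fop_sub_Fop A c (g (t + 1)) gs
  simp only [ip, ipH, toSum_sub, dotProduct_sub, sub_dotProduct, mulVec_sub]
    at hprox hsaddle hskew ⊢
  linarith

end Triples

theorem stmt9_general {p : ℕ} (A : Matrix (Fin p) (Fin p) ℝ) (c : Vec p) (r : ℝ)
    (H : Matrix (Idx3 p) (Idx3 p) ℝ) (hH : H.PosDef)
    (g : ℕ → Trip p) (hz : ∀ t, inZ r (g t).2.1)
    (hPVI : SatisfiesPVI A c r H g)
    (gs : Trip p) (hgs : IsSaddle A c r gs) :
    ∀ t : ℕ, ipH H (g (t + 1) - gs) (g (t + 1) - gs) ≤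
      ipH H (g t - gs) (g t - gs) - ipH H (g (t + 1) - g t) (g (t + 1) - g t) := by
  intro t
  have hsymm : H.IsSymm := isHermitian_iff_isSymm.mp hH.isHermitian
  have hcross := ipH_nonneg_of_saddle hz hPVI hgs t
  have hback : toSum (g t - g (t + 1)) = toSum (g t - gs) - toSum (g (t + 1) - gs) := by
    simp only [toSum_sub]; abel
  have hstep : toSum (g (t + 1) - g t) = toSum (g (t + 1) - gs) - toSum (g t - gs) := by
    simp only [toSum_sub]; abel
  rw [ipH, hback] at hcross
  rw [ipH, ipH, ipH, hstep]
  exact hsymm.dotProduct_mulVec_le_sub hcross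

/-- Contraction: if `g^t` (with `z^t ∈ Z_r`) satisfies the PPA variational inequality
with a symmetric positive definite `H` and `g*` is a saddle point, then
`‖g^{t+1} − g*‖_H² ≤ ‖g^t − g*‖_H² − ‖g^{t+1} − g^t‖_H²` for every `t`. -/
theorem stmt9 {p : ℕ} (A : Matrix (Fin p) (Fin p) ℝ) (c : Vec p) (r : ℝ) (hr : 0 ≤ r)
    (H : Matrix (Idx3 p) (Idx3 p) ℝ) (hH : H.PosDef)
    (g : ℕ → Trip p) (hz : ∀ t, inZ r (g t).2.1)
    (hPVI : SatisfiesPVI A c r H g)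
    (gs : Trip p) (hgs : IsSaddle A c r gs) :
    ∀ t : ℕ, ipH H (g (t + 1) - gs) (g (t + 1) - gs) ≤
      ipH H (g t - gs) (g t - gs) - ipH H (g (t + 1) - g t) (g (t + 1) - g t) :=
  stmt9_general A c r H hH g hz hPVI gs hgs
end
end

section
/- Let c ∈ ℝ^p, μ > 0, r ≥ 0, let {I_1, …, I_K} be a partition of {1, …, p} with A_i ∈ ℝ^{p×p_i} the corresponding column blocks of A ∈ ℝ^{p×p}, and let η_i > 0 satisfy η_i I_{p_i} − μ A_iᵀA_i positive definite for each i. Given (β^t, z^t, u^t) with z^t ∈ Z_r, define β_i^{t+1} = S_{1/η_i}(β_i^t + A_iᵀu^t/η_i) for each i, z^{t+1} = clip_r(z^t − u^t/μ), and u^{t+1} = u^t − (μ/(K+1))[2(Σ_i A_i β_i^{t+1} − z^{t+1} − c) − (Σ_i A_i β_i^t − z^t − c)]. Then for every g = (β, z, u) with z ∈ Z_r: ‖β‖₁ − ‖β^{t+1}‖₁ + ⟨g − g^{t+1}, F(g^{t+1})⟩ ≥ ⟨g − g^{t+1}, H_K(g^t − g^{t+1})⟩, where H_K = [[D, 0,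 Aᵀ], [0, μI_p, −I_p], [A, −I_p, ((K+1)/μ)I_p]] with D the block-diagonal matrix whose i-th block is η_i I_{p_i}. -/
open Matrix Filter

noncomputable section

/-- Soft-thresholding at level `κ`: `S_κ(x) = sign(x) · max(|x| − κ, 0)`. -/
def soft (κ x : ℝ) : ℝ := Real.sign x * max (|x| - κ) 0

/-- Clipping to `[−r, r]`: `clip_r(x) = min(max(x, −r), r)`. -/
def clip (r x : ℝ) : ℝ := min (max x (-r)) r

/-- The column block `A_i` of `A` corresponding to block `i` of the partition `π`. -/
def Ablock {p K : ℕ} (A : Matrix (Fin p) (Fin p) ℝ) (π : Fin p → Fin K) (i : Fin K) :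
    Matrix (Fin p) {j // π j = i} ℝ :=
  A.submatrix id Subtype.val

/-- `Σ_i A_i β_i`, the blockwise product over the partition `π`. -/
def blockSum {p K : ℕ} (A : Matrix (Fin p) (Fin p) ℝ) (π : Fin p → Fin K)
    (β : Fin p → ℝ) : Fin p → ℝ :=
  ∑ i : Fin K, Ablock A π i *ᵥ (fun j : {j // π j = i} => β j.val)


/-! The three updates are proximal steps: `β^{t+1}` is the prox of `‖·‖₁` in the metric `D`
(soft-thresholding), `z^{t+1}` is the projection onto the box `Z_r` (clipping), and the
`u`-update is designed so that the `u`-row of `H_K (g^t − g^{t+1})` equals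
`Aβ^{t+1} − z^{t+1} − c` exactly. The variational inequalities of the prox and of the
projection, tested at `β` and `z`, therefore add up to the claimed inequality, with the `u`-rows
cancelling. -/

lemma soft_cases {κ : ℝ} (hκ : 0 ≤ κ) (w : ℝ) :
    (κ ≤ w ∧ soft κ w = w - κ) ∨ (|w| ≤ κ ∧ soft κ w = 0) ∨ (w ≤ -κ ∧ soft κ w = w + κ) := by
  unfold soft
  rcases le_or_gt |w| κ with hw | hw
  · exact Or.inr (Or.inl ⟨hw, by simp [max_eq_right (sub_nonpos.mpr hw)]⟩)
  rcases lt_abs.mp hw with h | h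
  · left
    have hw0 : 0 < w := by linarith
    refine ⟨h.le, ?_⟩
    rw [Real.sign_of_pos hw0, abs_of_pos hw0, max_eq_left (by linarith)]
    ring
  · right; right
    have hw0 : w < 0 := by linarith
    refine ⟨by linarith, ?_⟩
    rw [Real.sign_of_neg hw0, abs_of_neg hw0, max_eq_left (by linarith)]
    ring

/-- The optimality condition of `S_κ` as the proximal map of `κ|·|`:
`w - S_κ w` is a subgradient of `κ|·|` at `S_κ w`. -/
theorem soft_variational {κ : ℝ} (hκ : 0 ≤ κ) (w x : ℝ) :
    (x - soft κ w) * (w - soft κ w) ≤ κ * (|x| - |soft κ w|) := by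
  have hx := neg_abs_le x
  have hx' := le_abs_self x
  rcases soft_cases hκ w with ⟨hw, hs⟩ | ⟨hw, hs⟩ | ⟨hw, hs⟩ <;> rw [hs]
  · rw [abs_of_nonneg (by linarith : 0 ≤ w - κ)]; nlinarith
  · simp only [sub_zero, abs_zero]
    calc x * w ≤ |x| * |w| := (le_abs_self _).trans (abs_mul x w).le
      _ ≤ κ * |x| := by rw [mul_comm κ]; exact mul_le_mul_of_nonneg_left hw (abs_nonneg x)
  · rw [abs_of_nonpos (by linarith : w + κ ≤ 0)]; nlinarith

theorem clip_variational {r x : ℝ} (hx : |x| ≤ r) (w : ℝ) :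
    (x - clip r w) * (w - clip r w) ≤ 0 := by
  obtain ⟨hx₁, hx₂⟩ := abs_le.mp hx
  unfold clip
  rcases le_total w (-r) with h | h
  · rw [max_eq_right h, min_eq_left (by linarith)]; nlinarith
  rcases le_total w r with h' | h'
  · rw [max_eq_left h, min_eq_left h']; simp
  · rw [max_eq_left h, min_eq_right h']; nlinarith

lemma ip_eq {p : ℕ} (v w : Trip p) :
    ip v w = v.1 ⬝ᵥ w.1 + v.2.1 ⬝ᵥ w.2.1 + v.2.2 ⬝ᵥ w.2.2 := by
  simp only [ip, toSum, sumElim_dotProduct_sumElim, add_assoc]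

lemma ipH_fromBlocks {p : ℕ} (A D : Matrix (Fin p) (Fin p) ℝ) (μ κ : ℝ) (v w : Trip p) :
    ipH (fromBlocks D (fromCols (0 : Matrix (Fin p) (Fin p) ℝ) Aᵀ)
          (fromRows (0 : Matrix (Fin p) (Fin p) ℝ) A)
          (fromBlocks (μ • (1 : Matrix (Fin p) (Fin p) ℝ))
            (-(1 : Matrix (Fin p) (Fin p) ℝ)) (-(1 : Matrix (Fin p) (Fin p) ℝ))
            (κ • (1 : Matrix (Fin p) (Fin p) ℝ)))) v w
      = v.1 ⬝ᵥ (D *ᵥ w.1 + Aᵀ *ᵥ w.2.2) + v.2.1 ⬝ᵥ (μ • w.2.1 - w.2.2)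
        + v.2.2 ⬝ᵥ (A *ᵥ w.1 - w.2.1 + κ • w.2.2) := by
  simp only [ipH, toSum, fromBlocks_mulVec, Sum.elim_comp_inl, Sum.elim_comp_inr,
    fromCols_mulVec_sumElim, fromRows_mulVec, sumElim_dotProduct_sumElim]
  simp [smul_mulVec, sub_eq_add_neg, neg_mulVec]
  ring

lemma blockSum_eq_mulVec {p K : ℕ} (A : Matrix (Fin p) (Fin p) ℝ) (π : Fin p → Fin K)
    (β : Vec p) : blockSum A π β = A *ᵥ β := by
  funext j₀
  simp only [blockSum, Finset.sum_apply, Ablock, mulVec, dotProduct, submatrix_apply, id]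
  exact Fintype.sum_fiberwise π (fun j => A j₀ j * β j)

theorem dotProduct_le_l1_sub_of_soft {p : ℕ} {d : Vec p} (hd : ∀ j, 0 < d j)
    {βt βn a : Vec p} (hβn : ∀ j, βn j = soft (1 / d j) (βt j + a j / d j)) (β : Vec p) :
    (β - βn) ⬝ᵥ (diagonal d *ᵥ (βt - βn) + a) ≤ l1 β - l1 βn := by
  simp only [l1, ← Finset.sum_sub_distrib, dotProduct]
  refine Finset.sum_le_sum fun j _ => ?_
  rw [Pi.add_apply, mulVec_diagonal]
  have h := soft_variational (one_div_nonneg.mpr (hd j).le) (βt j + a j / d j) (β j)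
  rw [← hβn j] at h
  have hdj : d j ≠ 0 := (hd j).ne'
  calc (β - βn) j * (d j * (βt - βn) j + a j)
      = d j * ((β j - βn j) * (βt j + a j / d j - βn j)) := by
        simp only [Pi.sub_apply]; field_simp; ring
    _ ≤ d j * (1 / d j * (|β j| - |βn j|)) := mul_le_mul_of_nonneg_left h (hd j).le
    _ = |β j| - |βn j| := by field_simp

theorem dotProduct_clip_nonneg {p : ℕ} {r μ : ℝ} (hμ : 0 < μ) {z zt ut zn : Vec p}
    (hz : inZ r z) (hzn : zn = fun j => clip r (zt j - ut j / μ)) :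
    0 ≤ (z - zn) ⬝ᵥ (μ • (zn - zt) + ut) := by
  refine Finset.sum_nonneg fun j _ => ?_
  have h := clip_variational (hz j) (zt j - ut j / μ)
  rw [show clip r (zt j - ut j / μ) = zn j by rw [hzn]] at h
  have : (z - zn) j * (μ • (zn - zt) + ut) j = -μ * ((z j - zn j) * (zt j - ut j / μ - zn j)) := by
    simp only [Pi.sub_apply, Pi.add_apply, Pi.smul_apply, smul_eq_mul]; field_simp; ring
  rw [this]
  exact mul_nonneg_of_nonpos_of_nonpos (by linarith) h

lemma dual_update_eq {p K : ℕ} (A : Matrix (Fin p) (Fin p) ℝ) {μ : ℝ} (hμ : μ ≠ 0)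
    {c βt zt ut βn zn un : Vec p}
    (hun : un = ut - (μ / (K + 1 : ℝ)) •
      ((2 : ℝ) • (A *ᵥ βn - zn - c) - (A *ᵥ βt - zt - c))) :
    A *ᵥ (βt - βn) - (zt - zn) + ((K + 1 : ℝ) / μ) • (ut - un) = A *ᵥ βn - zn - c := by
  subst hun
  ext j
  simp only [mulVec_sub, Pi.sub_apply, Pi.add_apply, Pi.smul_apply, smul_eq_mul]
  field_simp
  ring

theorem stmt19_general {p K : ℕ} (A : Matrix (Fin p) (Fin p) ℝ) (c : Vec p)
    (μ r : ℝ) (hμ : 0 < μ)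
    (π : Fin p → Fin K)
    (η : Fin K → ℝ) (hη : ∀ i, 0 < η i)
    (βt zt ut βn zn un : Vec p)
    (hβn : ∀ i : Fin K, ∀ j : {j // π j = i},
      βn j.val = soft (1 / η i) (βt j.val + ((Ablock A π i)ᵀ *ᵥ ut) j / η i))
    (hzn : zn = fun j => clip r (zt j - ut j / μ))
    (hun : un = ut - (μ / (K + 1 : ℝ)) •
      ((2 : ℝ) • (blockSum A π βn - zn - c) - (blockSum A π βt - zt - c))) :
    ∀ gg : Trip p, inZ r gg.2.1 →
      ipH (Matrix.fromBlocks (Matrix.diagonal fun j => η (π j))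
          (Matrix.fromCols (0 : Matrix (Fin p) (Fin p) ℝ) Aᵀ)
          (Matrix.fromRows (0 : Matrix (Fin p) (Fin p) ℝ) A)
          (Matrix.fromBlocks (μ • (1 : Matrix (Fin p) (Fin p) ℝ))
            (-(1 : Matrix (Fin p) (Fin p) ℝ)) (-(1 : Matrix (Fin p) (Fin p) ℝ))
            (((K + 1 : ℝ) / μ) • (1 : Matrix (Fin p) (Fin p) ℝ))))
        (gg - (βn, zn, un)) ((βt, zt, ut) - (βn, zn, un)) ≤
      l1 gg.1 - l1 βn + ip (gg - (βn, zn, un)) (Fop A c (βn, zn, un)) := by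
  rintro ⟨β, z, u⟩ hzZ
  have hβ := dotProduct_le_l1_sub_of_soft (d := fun j => η (π j)) (fun j => hη (π j))
    (a := Aᵀ *ᵥ ut) (fun j => hβn (π j) ⟨j, rfl⟩) β
  have hz := dotProduct_clip_nonneg hμ hzZ hzn
  rw [blockSum_eq_mulVec, blockSum_eq_mulVec] at hun
  have hu := dual_update_eq A hμ.ne' hun
  rw [ipH_fromBlocks, ip_eq]
  simp only [Prod.fst_sub, Prod.snd_sub, Fop, hu]
  simp only [mulVec_sub, dotProduct_add, dotProduct_sub, dotProduct_neg, dotProduct_smul,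
    smul_eq_mul] at hβ hz ⊢
  linarith

/-- One step of the improved parallel (linearized) PPA for the Dantzig selector
satisfies the PPA variational inequality with matrix
`H_K = [[D, 0, Aᵀ], [0, μI, −I], [A, −I, ((K+1)/μ)I]]`, where `D` is the
block-diagonal matrix whose `i`-th block is `η_i I_{p_i}`. -/
theorem stmt19 {p K : ℕ} (A : Matrix (Fin p) (Fin p) ℝ) (c : Vec p)
    (μ r : ℝ) (hμ : 0 < μ) (hr : 0 ≤ r)
    (π : Fin p → Fin K) (hπ : Function.Surjective π)
    (η : Fin K → ℝ) (hη : ∀ i, 0 < η i)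
    (hS : ∀ i : Fin K,
      ((η i) • (1 : Matrix {j // π j = i} {j // π j = i} ℝ) -
        μ • ((Ablock A π i)ᵀ * Ablock A π i)).PosDef)
    (βt zt ut βn zn un : Vec p) (hzt : inZ r zt)
    (hβn : ∀ i : Fin K, ∀ j : {j // π j = i},
      βn j.val = soft (1 / η i) (βt j.val + ((Ablock A π i)ᵀ *ᵥ ut) j / η i))
    (hzn : zn = fun j => clip r (zt j - ut j / μ))
    (hun : un = ut - (μ / (K + 1 : ℝ)) •
      ((2 : ℝ) • (blockSum A π βn - zn - c) - (blockSum A π βt - zt - c))) :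
    ∀ gg : Trip p, inZ r gg.2.1 →
      ipH (Matrix.fromBlocks (Matrix.diagonal fun j => η (π j))
          (Matrix.fromCols (0 : Matrix (Fin p) (Fin p) ℝ) Aᵀ)
          (Matrix.fromRows (0 : Matrix (Fin p) (Fin p) ℝ) A)
          (Matrix.fromBlocks (μ • (1 : Matrix (Fin p) (Fin p) ℝ))
            (-(1 : Matrix (Fin p) (Fin p) ℝ)) (-(1 : Matrix (Fin p) (Fin p) ℝ))
            (((K + 1 : ℝ) / μ) • (1 : Matrix (Fin p) (Fin p) ℝ))))
        (gg - (βn, zn, un)) ((βt, zt, ut) - (βn, zn, un)) ≤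
      l1 gg.1 - l1 βn + ip (gg - (βn, zn, un)) (Fop A c (βn, zn, un)) :=
  stmt19_general A c μ r hμ π η hη βt zt ut βn zn un hβn hzn hun
end
end
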